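/- Let h be a real form of degree d in n variables whose support has exactly k monomials, and suppose h is indefinite (it attains both positive and negative values on ℝⁿ) and irreducible in ℝ[x₁,…,xₙ]. Then h² ∈ Σ_{n,2d}^k but h² ∉ Σ_{n,2d}^{k-1}. -/

import Mathlib

/-!
If `h ^ 2 = ∑ fⱼ ^ 2`, every `fⱼ` vanishes on the real zeros of `h`. For irreducible indefinite `h`
this forces `h ∣ fⱼ`: otherwise, with `h a > 0 > h b` and `v = b - a`, the resultant in `t` of
`h (x + t • v)` and `fⱼ (x + t • v)` is a nonzero polynomial in `x` (Gauss's lemma), yet it vanishes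
for every `x` near `a`, since `t ↦ h (x + t • v)` changes sign on `[0, 1]`. Comparing degrees, some
`fⱼ` is then a nonzero constant multiple of `h`, so it has exactly `k` monomials.
-/

open MvPolynomial

/-- `F_{n,d}^k`: real forms of degree `d` in `n` variables with at most `k` monomials. -/
def IsFormK (n d k : ℕ) (h : MvPolynomial (Fin n) ℝ) : Prop :=
  h.IsHomogeneous d ∧ h.support.card ≤ k

/-- `Σ_{n,2d}^k`: finite sums of squares of forms in `F_{n,d}^k`. -/
def SigmaSOS (n d k : ℕ) : Set (MvPolynomial (Fin n) ℝ) :=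
  { p | ∃ (m : ℕ) (f : Fin m → MvPolynomial (Fin n) ℝ),
      (∀ j, IsFormK n d k (f j)) ∧ p = ∑ j, (f j) ^ 2 }

open scoped Polynomial Topology

namespace Polynomial

variable {R : Type*} [CommRing R]

theorem map_resultant_eq_zero_of_eval₂_eq_zero {S : Type*} [CommRing S] (φ : R →+* S) (t : S)
    {f g : R[X]} (hf0 : f.natDegree ≠ 0) (hf : f.eval₂ φ t = 0) (hg : g.eval₂ φ t = 0) :
    φ (f.resultant g) = 0 := by
  obtain ⟨p, q, -, -, hpq⟩ := exists_mul_add_mul_eq_C_resultant f g le_rfl le_rfl (Or.inl hf0)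
  simpa [hf, hg] using congrArg (eval₂ φ t) hpq.symm

theorem resultant_ne_zero_of_irreducible_of_not_dvd [IsDomain R] [IsGCDMonoid R] {f g : R[X]}
    (hf : Irreducible f) (hf0 : f.natDegree ≠ 0) (hfg : ¬f ∣ g) : f.resultant g ≠ 0 := by
  let K := FractionRing R
  have hinj : Function.Injective (algebraMap R K) := IsFractionRing.injective R K
  have hprim := hf.isPrimitive hf0
  have hcop : IsCoprime (f.map (algebraMap R K)) (g.map (algebraMap R K)) :=
    ((hprim.irreducible_iff_irreducible_map_fraction_map.mp hf).coprime_iff_not_dvd).mpr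
      fun h => hfg (hprim.dvd_of_fraction_map_dvd_fraction_map h)
  have := resultant_ne_zero _ _ hcop
  rwa [natDegree_map_eq_of_injective hinj, natDegree_map_eq_of_injective hinj, resultant_map_map,
    map_ne_zero_iff _ hinj] at this

end Polynomial

namespace MvPolynomial

variable {σ : Type*}

theorem eq_zero_of_eventually_eval_eq_zero [Fintype σ] {p : MvPolynomial σ ℝ} {a : σ → ℝ}
    (h : ∀ᶠ x in 𝓝 a, eval x p = 0) : p = 0 := by
  obtain ⟨ε, hε, hball⟩ := Metric.eventually_nhds_iff_ball.mp h
  refine funext_set (fun i => Metric.ball (a i) ε) (fun i => ?_) fun x hx => ?_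
  · rw [Real.ball_eq_Ioo]
    exact Set.Ioo_infinite (by linarith)
  · rw [map_zero]
    exact hball x (by rwa [ball_pi a hε])

theorem IsHomogeneous.support_eq_of_dvd {R : Type*} [CommRing R] [IsDomain R] {d : ℕ}
    {h f : MvPolynomial σ R} (hh : h.IsHomogeneous d) (hf : f.IsHomogeneous d) (hf0 : f ≠ 0)
    (hdvd : h ∣ f) : f.support = h.support := by
  obtain ⟨g, rfl⟩ := hdvd
  have hh0 : h ≠ 0 := left_ne_zero_of_mul hf0
  have hg0 : g ≠ 0 := right_ne_zero_of_mul hf0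
  have hdeg := totalDegree_mul_of_isDomain hh0 hg0
  rw [hf.totalDegree hf0, hh.totalDegree hh0] at hdeg
  obtain ⟨c, rfl⟩ : ∃ c, g = C c := ⟨_, totalDegree_eq_zero_iff_eq_C.mp (by omega)⟩
  have hc : c ≠ 0 := by rintro rfl; simp at hg0
  rw [mul_comm, ← smul_eq_C_mul, support_smul_eq hc]

/-- `lineShift v` substitutes `x + t • v` for `x`, where `t` is the variable of the outer
polynomial ring. -/
noncomputable def lineShift (v : σ → ℝ) : (MvPolynomial σ ℝ)[X] →+* (MvPolynomial σ ℝ)[X] :=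
  Polynomial.eval₂RingHom
    (eval₂Hom (Polynomial.C.comp C) fun i =>
      Polynomial.C (X i) + Polynomial.C (C (v i)) * Polynomial.X)
    Polynomial.X

theorem lineShift_comp_lineShift_neg (v : σ → ℝ) :
    (lineShift v).comp (lineShift (-v)) = RingHom.id _ := by
  refine Polynomial.ringHom_ext' (MvPolynomial.ringHom_ext (fun r => ?_) fun i => ?_) ?_ <;>
    simp [lineShift]
  ring

noncomputable def lineShiftEquiv (v : σ → ℝ) : (MvPolynomial σ ℝ)[X] ≃+* (MvPolynomial σ ℝ)[X] :=
  RingEquiv.ofRingHom (lineShift v) (lineShift (-v))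
    (lineShift_comp_lineShift_neg v) (by simpa using lineShift_comp_lineShift_neg (-v))

theorem eval₂_lineShiftEquiv_C (v x : σ → ℝ) (t : ℝ) (p : MvPolynomial σ ℝ) :
    (lineShiftEquiv v (Polynomial.C p)).eval₂ (eval x) t = eval (x + t • v) p := by
  suffices ((Polynomial.eval₂RingHom (eval x) t).comp ((lineShift v).comp Polynomial.C)) =
      eval (x + t • v) from congrArg (· p) this
  refine MvPolynomial.ringHom_ext (fun r => ?_) fun i => ?_ <;> simp [lineShift]
  ring

theorem natDegree_lineShiftEquiv_C_ne_zero {v a : σ → ℝ} {p : MvPolynomial σ ℝ}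
    (hp : eval a p ≠ eval (a + v) p) : (lineShiftEquiv v (Polynomial.C p)).natDegree ≠ 0 := by
  intro h0
  have hat0 := eval₂_lineShiftEquiv_C v a 0 p
  have hat1 := eval₂_lineShiftEquiv_C v a 1 p
  rw [Polynomial.eq_C_of_natDegree_eq_zero h0, Polynomial.eval₂_C] at hat0 hat1
  exact hp (by simpa using hat0.symm.trans hat1)

theorem _root_.Irreducible.dvd_of_eval_eq_zero_of_indefinite [Fintype σ]
    {h f : MvPolynomial σ ℝ} (hirr : Irreducible h) {a b : σ → ℝ} (ha : 0 < eval a h)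
    (hb : eval b h < 0) (hf : ∀ x, eval x h = 0 → eval x f = 0) : h ∣ f := by
  by_contra hhf
  set v := b - a
  set T := lineShiftEquiv v
  have hbv : eval (a + v) h < 0 := by rwa [add_sub_cancel]
  have hdeg : (T (Polynomial.C h)).natDegree ≠ 0 :=
    natDegree_lineShiftEquiv_C_ne_zero (hbv.trans ha).ne'
  have hTirr : Irreducible (T (Polynomial.C h)) :=
    (MulEquiv.irreducible_iff T).mpr (Polynomial.prime_C_iff.mpr hirr.prime).irreducible
  have hTdvd : ¬T (Polynomial.C h) ∣ T (Polynomial.C f) := by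
    rw [map_dvd_iff]
    exact fun hd => hhf (by simpa using map_dvd Polynomial.constantCoeff hd)
  apply Polynomial.resultant_ne_zero_of_irreducible_of_not_dvd hTirr hdeg hTdvd
  apply eq_zero_of_eventually_eval_eq_zero (a := a)
  have hcont : Continuous fun x => eval (x + v) h :=
    (continuous_eval h).comp (continuous_add_const v)
  filter_upwards [(continuous_eval h).continuousAt.eventually (lt_mem_nhds ha),
    hcont.continuousAt.eventually (gt_mem_nhds hbv)] with x hx0 hx1
  obtain ⟨t, -, ht⟩ : ∃ t ∈ Set.Icc (0 : ℝ) 1, eval (x + t • v) h = 0 := by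
    refine intermediate_value_Icc' zero_le_one ((continuous_eval h).comp ?_).continuousOn ?_
    · fun_prop
    · simp [hx0.le, hx1.le]
  exact Polynomial.map_resultant_eq_zero_of_eval₂_eq_zero (eval x) t hdeg
    (by rwa [eval₂_lineShiftEquiv_C]) (by rw [eval₂_lineShiftEquiv_C]; exact hf _ ht)

end MvPolynomial

theorem sq_mem_sigma_k_not_sigma_pred (n d k : ℕ)
    (h : MvPolynomial (Fin n) ℝ) (hhom : h.IsHomogeneous d)
    (hcard : h.support.card = k)
    (hindef : ∃ a b : Fin n → ℝ, 0 < eval a h ∧ eval b h < 0)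
    (hirr : Irreducible h) :
    h ^ 2 ∈ SigmaSOS n d k ∧ h ^ 2 ∉ SigmaSOS n d (k - 1) := by
  obtain ⟨a, b, ha, hb⟩ := hindef
  refine ⟨⟨1, fun _ => h, fun _ => ⟨hhom, hcard.le⟩, by simp⟩, ?_⟩
  rintro ⟨m, f, hf, hsum⟩
  have hh0 : h ≠ 0 := by rintro rfl; simp at ha
  have hvanish : ∀ j x, eval x h = 0 → eval x (f j) = 0 := by
    intro j x hx
    have hsq : ∑ i, eval x (f i) ^ 2 = 0 := by simpa [hx] using congrArg (eval x) hsum.symm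
    exact pow_eq_zero_iff two_ne_zero |>.mp
      ((Finset.sum_eq_zero_iff_of_nonneg fun i _ => sq_nonneg _).mp hsq j (Finset.mem_univ j))
  obtain ⟨j, hj⟩ : ∃ j, f j ≠ 0 := by
    by_contra! hzero
    exact hh0 (pow_eq_zero_iff two_ne_zero |>.mp (by simp [hsum, hzero]))
  have hsupp := hhom.support_eq_of_dvd (hf j).1 hj
    (hirr.dvd_of_eval_eq_zero_of_indefinite ha hb (hvanish j))
  have hk : 0 < k := hcard ▸ Finset.card_pos.mpr (support_nonempty.mpr hh0)
  have hcardj := (hf j).2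
  rw [hsupp, hcard] at hcardj
  omega
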